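/- arXiv:2602.17019 — 2 statements merged into one kernel-verified Lean document; each statement's English description precedes it below -/
import Mathlib

section
/- For any c ≥ 0 and α ∈ [2,6], the function f(x,y) = (1/x)·log₂(1 + c/y^{α/2}) is convex on the domain {(x,y) : x > 0, y > 0}. -/
private lemma exp_three_half_le_six : Real.exp (3/2) ≤ 6 := by
  have h3 : Real.exp 3 = Real.exp 1 * Real.exp 1 * Real.exp 1 := by
    rw [← Real.exp_add, ← Real.exp_add]; norm_num
  have he : Real.exp 1 < 2.7182818286 := Real.exp_one_lt_d9
  have hp := Real.exp_pos (1:ℝ)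
  have hsq : Real.exp (3/2) * Real.exp (3/2) = Real.exp 3 := by
    rw [← Real.exp_add]; norm_num
  nlinarith [Real.exp_pos ((3:ℝ)/2)]

private lemma keyineq {β c P : ℝ} (hβ1 : 1 ≤ β) (hβ3 : β ≤ 3) (hc : 0 < c) (hP : 0 < P) :
    β * c ≤ 2 * Real.log (1 + c / P) * ((β + 1) * P + c) := by
  have hpc : 0 < P + c := by linarith
  have h1cP : (0:ℝ) < 1 + c / P := by positivity
  have hL0 : 0 ≤ Real.log (1 + c / P) := Real.log_nonneg (by nlinarith [div_pos hc hP])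
  rcases le_or_gt c (5 * P) with h5 | h5
  · have hlog : c / (P + c) ≤ Real.log (1 + c / P) := by
      have h := Real.log_le_sub_one_of_pos (show (0:ℝ) < (1 + c/P)⁻¹ by positivity)
      rw [Real.log_inv] at h
      have he : c / (P + c) = 1 - (1 + c/P)⁻¹ := by field_simp; ring
      rw [he]; linarith
    have hL' : c ≤ Real.log (1 + c / P) * (P + c) := (div_le_iff₀ hpc).mp hlog
    have hmul := mul_le_mul_of_nonneg_right hL'
      (show (0:ℝ) ≤ 2*((β+1)*P+c) by nlinarith)
    refine le_of_mul_le_mul_right ?_ hpc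
    rcases le_or_gt β 2 with hβ2 | hβ2
    · nlinarith [hmul, mul_nonneg (sub_nonneg.2 hβ2) (mul_pos hc hc).le,
        mul_nonneg (sub_nonneg.2 hβ1) (mul_pos hP hc).le, mul_pos hP hc]
    · nlinarith [hmul, mul_nonneg (mul_nonneg (sub_nonneg.2 hβ2.le) (sub_nonneg.2 h5)) hc.le,
        mul_nonneg (sub_nonneg.2 hβ3) (mul_pos hP hc).le, mul_pos hP hc]
  · have h6 : (6:ℝ) ≤ 1 + c / P := by
      have : (5:ℝ) ≤ c / P := (le_div_iff₀ hP).mpr (by linarith)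
      linarith
    have hL32 : (3:ℝ)/2 ≤ Real.log (1 + c / P) := by
      refine le_trans ?_ (Real.log_le_log (by norm_num) h6)
      rw [Real.le_log_iff_exp_le (by norm_num)]
      exact exp_three_half_le_six
    nlinarith [mul_le_mul_of_nonneg_right hL32 (show (0:ℝ) ≤ (β+1)*P+c by nlinarith),
      mul_nonneg (mul_nonneg (sub_nonneg.2 hβ3) hP.le) hc.le]

private lemma hasDerivAt_g {β c : ℝ} {y : ℝ} (hy : 0 < y) (hc : 0 ≤ c) :
    HasDerivAt (fun y : ℝ => Real.log (1 + c / y ^ β))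
      (-(β * c) / (y * (y ^ β + c))) y := by
  have hyP : 0 < y ^ β := Real.rpow_pos_of_pos hy β
  have hP : HasDerivAt (fun y : ℝ => y ^ β) (β * y ^ (β - 1)) y :=
    Real.hasDerivAt_rpow_const (Or.inl hy.ne')
  have hdiv : HasDerivAt (fun y : ℝ => 1 + c / y ^ β)
      ((0 * y ^ β - c * (β * y ^ (β - 1))) / (y ^ β) ^ 2) y :=
    ((hasDerivAt_const y c).div hP hyP.ne').const_add 1
  have hpos : 0 < 1 + c / y ^ β := by positivity
  have h := hdiv.log hpos.ne'
  convert h using 1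
  rw [Real.rpow_sub_one hy.ne']
  field_simp
  ring

private lemma hasDerivAt_g1 {β c : ℝ} {y : ℝ} (hy : 0 < y) (hc : 0 ≤ c) :
    HasDerivAt (fun y : ℝ => -(β * c) / (y * (y ^ β + c)))
      (β * c * ((β + 1) * y ^ β + c) / (y * (y ^ β + c)) ^ 2) y := by
  have hyP : 0 < y ^ β := Real.rpow_pos_of_pos hy β
  have hP : HasDerivAt (fun y : ℝ => y ^ β) (β * y ^ (β - 1)) y :=
    Real.hasDerivAt_rpow_const (Or.inl hy.ne')
  have hD : HasDerivAt (fun y : ℝ => y * (y ^ β + c))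
      (1 * (y ^ β + c) + y * (β * y ^ (β - 1))) y :=
    (hasDerivAt_id y).mul (hP.add_const c)
  have hDpos : 0 < y * (y ^ β + c) := mul_pos hy (by linarith)
  have h := (hasDerivAt_const y (-(β * c))).div hD hDpos.ne'
  refine h.congr_deriv ?_
  have e : y * (β * y ^ (β - 1)) = β * y ^ β := by
    rw [Real.rpow_sub_one hy.ne']; field_simp
  rw [e]
  ring

private lemma key_sq {β c y : ℝ} (hβ1 : 1 ≤ β) (hβ3 : β ≤ 3) (hc : 0 < c) (hy : 0 < y) :
    (-(β * c) / (y * (y ^ β + c))) ^ 2 ≤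
      2 * Real.log (1 + c / y ^ β) *
        (β * c * ((β + 1) * y ^ β + c) / (y * (y ^ β + c)) ^ 2) := by
  have hP : 0 < y ^ β := Real.rpow_pos_of_pos hy β
  have hkey : β * c ≤ 2 * Real.log (1 + c / y ^ β) * ((β + 1) * y ^ β + c) := by
    simpa using (keyineq hβ1 hβ3 hc hP)
  have hden : 0 < (y * (y ^ β + c)) ^ 2 := by positivity
  have hnum : (β * c) ^ 2 ≤ 2 * Real.log (1 + c / y ^ β) * (β * c * ((β + 1) * y ^ β + c)) := by
    nlinarith [mul_le_mul_of_nonneg_left hkey (mul_nonneg (by linarith : (0:ℝ) ≤ β) hc.le)]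
  calc (-(β * c) / (y * (y ^ β + c))) ^ 2
      = (β * c) ^ 2 / (y * (y ^ β + c)) ^ 2 := by rw [div_pow, neg_sq]
    _ ≤ (2 * Real.log (1 + c / y ^ β) * (β * c * ((β + 1) * y ^ β + c)))
          / (y * (y ^ β + c)) ^ 2 := by gcongr
    _ = _ := by ring
set_option maxHeartbeats 1000000 in
private lemma seg_convex {β c : ℝ} (hβ1 : 1 ≤ β) (hβ3 : β ≤ 3) (hc : 0 < c)
    {x1 y1 dx dy L : ℝ} (hL : 0 < L)
    (hX : ∀ t ∈ Set.Icc (0:ℝ) 1, 0 < x1 + t * dx)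
    (hY : ∀ t ∈ Set.Icc (0:ℝ) 1, 0 < y1 + t * dy) :
    ConvexOn ℝ (Set.Icc (0:ℝ) 1)
      (fun t => (x1 + t * dx)⁻¹ * Real.log (1 + c / (y1 + t * dy) ^ β) / L) := by
  have hXd : ∀ t : ℝ, HasDerivAt (fun t : ℝ => x1 + t * dx) dx t := by
    intro t; simpa using ((hasDerivAt_id t).mul_const dx).const_add x1
  have hYd : ∀ t : ℝ, HasDerivAt (fun t : ℝ => y1 + t * dy) dy t := by
    intro t; simpa using ((hasDerivAt_id t).mul_const dy).const_add y1
  have hbase : ∀ t ∈ Set.Icc (0:ℝ) 1,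
      HasDerivAt (fun t : ℝ => (x1 + t * dx)⁻¹ * Real.log (1 + c / (y1 + t * dy) ^ β) / L)
        ((-dx / (x1 + t * dx) ^ 2 * Real.log (1 + c / (y1 + t * dy) ^ β)
          + (x1 + t * dx)⁻¹ * (-(β * c) / ((y1 + t * dy) * ((y1 + t * dy) ^ β + c)) * dy)) / L) t := by
    intro t ht
    have hXt := hX t ht
    have hYt := hY t ht
    have hGd : HasDerivAt (fun t : ℝ => Real.log (1 + c / (y1 + t * dy) ^ β))
        (-(β * c) / ((y1 + t * dy) * ((y1 + t * dy) ^ β + c)) * dy) t :=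
      by have := (hasDerivAt_g (β := β) hYt hc.le).comp t (hYd t); exact this
    have hXinv : HasDerivAt (fun t : ℝ => (x1 + t * dx)⁻¹)
        (-dx / (x1 + t * dx) ^ 2) t := (hXd t).inv hXt.ne'
    exact (hXinv.mul hGd).div_const L
  have hcont : ContinuousOn
      (fun t => (x1 + t * dx)⁻¹ * Real.log (1 + c / (y1 + t * dy) ^ β) / L)
      (Set.Icc (0:ℝ) 1) :=
    fun t ht => (hbase t ht).continuousAt.continuousWithinAt
  have hf' : ∀ t ∈ interior (Set.Icc (0:ℝ) 1),
      HasDerivWithinAt (fun t => (x1 + t * dx)⁻¹ * Real.log (1 + c / (y1 + t * dy) ^ β) / L)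
        ((-dx / (x1 + t * dx) ^ 2 * Real.log (1 + c / (y1 + t * dy) ^ β)
          + (x1 + t * dx)⁻¹ * (-(β * c) / ((y1 + t * dy) * ((y1 + t * dy) ^ β + c)) * dy)) / L)
        (interior (Set.Icc (0:ℝ) 1)) t :=
    fun t ht => (hbase t (interior_subset ht)).hasDerivWithinAt
  have hf'' : ∀ t ∈ interior (Set.Icc (0:ℝ) 1),
      HasDerivWithinAt (fun t =>
          (-dx / (x1 + t * dx) ^ 2 * Real.log (1 + c / (y1 + t * dy) ^ β)
          + (x1 + t * dx)⁻¹ * (-(β * c) / ((y1 + t * dy) * ((y1 + t * dy) ^ β + c)) * dy)) / L)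
        ((2 * dx ^ 2 * Real.log (1 + c / (y1 + t * dy) ^ β)
          - 2 * dx * dy * (-(β * c) / ((y1 + t * dy) * ((y1 + t * dy) ^ β + c))) * (x1 + t * dx)
          + dy ^ 2 * (β * c * ((β + 1) * (y1 + t * dy) ^ β + c)
              / ((y1 + t * dy) * ((y1 + t * dy) ^ β + c)) ^ 2) * (x1 + t * dx) ^ 2)
          / ((x1 + t * dx) ^ 3 * L))
        (interior (Set.Icc (0:ℝ) 1)) t := by
    intro t ht
    rw [interior_Icc] at ht
    have ht' : t ∈ Set.Icc (0:ℝ) 1 := Set.mem_Icc_of_Ioo ht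
    have hXt := hX t ht'
    have hYt := hY t ht'
    have hP : 0 < (y1 + t * dy) ^ β := Real.rpow_pos_of_pos hYt β
    have hQ : 0 < (y1 + t * dy) ^ β + c := by linarith
    have hGd : HasDerivAt (fun t : ℝ => Real.log (1 + c / (y1 + t * dy) ^ β))
        (-(β * c) / ((y1 + t * dy) * ((y1 + t * dy) ^ β + c)) * dy) t :=
      by have := (hasDerivAt_g (β := β) hYt hc.le).comp t (hYd t); exact this
    have hXinv : HasDerivAt (fun t : ℝ => (x1 + t * dx)⁻¹)
        (-dx / (x1 + t * dx) ^ 2) t := (hXd t).inv hXt.ne'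
    have h1a := (hasDerivAt_const t (-dx)).div ((hXd t).pow 2) (pow_ne_zero 2 hXt.ne')
    have h1 := h1a.mul hGd
    have hG1d : HasDerivAt (fun t : ℝ => -(β * c) / ((y1 + t * dy) * ((y1 + t * dy) ^ β + c)))
        (β * c * ((β + 1) * (y1 + t * dy) ^ β + c)
            / ((y1 + t * dy) * ((y1 + t * dy) ^ β + c)) ^ 2 * dy) t :=
      by have := (hasDerivAt_g1 (β := β) hYt hc.le).comp t (hYd t); exact this
    have h2 := hXinv.mul (hG1d.mul_const dy)
    have hder := (h1.add h2).div_const L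
    refine HasDerivAt.hasDerivWithinAt ?_
    refine hder.congr_deriv ?_
    simp only [Pi.div_apply, Pi.pow_apply]
    set X := x1 + t * dx with hXdef
    set Y := y1 + t * dy with hYdef
    set P := Y ^ β with hPdef
    set G := Real.log (1 + c / P) with hGdef
    set G1 := -(β * c) / (Y * (P + c)) with hG1def
    set G2 := β * c * ((β + 1) * P + c) / (Y * (P + c)) ^ 2 with hG2def
    field_simp
    ring
  have hnn : ∀ t ∈ interior (Set.Icc (0:ℝ) 1),
      0 ≤ (2 * dx ^ 2 * Real.log (1 + c / (y1 + t * dy) ^ β)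
          - 2 * dx * dy * (-(β * c) / ((y1 + t * dy) * ((y1 + t * dy) ^ β + c))) * (x1 + t * dx)
          + dy ^ 2 * (β * c * ((β + 1) * (y1 + t * dy) ^ β + c)
              / ((y1 + t * dy) * ((y1 + t * dy) ^ β + c)) ^ 2) * (x1 + t * dx) ^ 2)
          / ((x1 + t * dx) ^ 3 * L) := by
    intro t ht
    rw [interior_Icc] at ht
    have ht' : t ∈ Set.Icc (0:ℝ) 1 := Set.mem_Icc_of_Ioo ht
    have hXt := hX t ht'
    have hYt := hY t ht'
    have hkey : (-(β * c) / ((y1 + t * dy) * ((y1 + t * dy) ^ β + c))) ^ 2 ≤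
        2 * Real.log (1 + c / (y1 + t * dy) ^ β) *
          (β * c * ((β + 1) * (y1 + t * dy) ^ β + c)
            / ((y1 + t * dy) * ((y1 + t * dy) ^ β + c)) ^ 2) :=
      key_sq hβ1 hβ3 hc hYt
    set G := Real.log (1 + c / (y1 + t * dy) ^ β) with hG
    set G1 := -(β * c) / ((y1 + t * dy) * ((y1 + t * dy) ^ β + c)) with hG1
    set G2 := β * c * ((β + 1) * (y1 + t * dy) ^ β + c)
        / ((y1 + t * dy) * ((y1 + t * dy) ^ β + c)) ^ 2 with hG2
    set X := x1 + t * dx with hXdef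
    have hP : 0 < (y1 + t * dy) ^ β := Real.rpow_pos_of_pos hYt β
    have hGnn : 0 ≤ G := Real.log_nonneg (by nlinarith [div_pos hc hP])
    have hG2nn : 0 ≤ G2 := by
      rw [hG2]
      apply div_nonneg _ (sq_nonneg _)
      have h1 : (0:ℝ) ≤ β * c := by nlinarith
      have h2 : (0:ℝ) ≤ (β + 1) * (y1 + t * dy) ^ β + c := by
        nlinarith [mul_pos (show (0:ℝ) < β + 1 by linarith) hP]
      exact mul_nonneg h1 h2
    apply div_nonneg _ (by positivity)
    have hA : 0 ≤ 2 * G * dx ^ 2 := by positivity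
    have hB : 0 ≤ G2 * (dy * X) ^ 2 := by positivity
    have hAB : (G1 * dx * (dy * X)) ^ 2 ≤ (2 * G * dx ^ 2) * (G2 * (dy * X) ^ 2) := by
      nlinarith [mul_le_mul_of_nonneg_right hkey (sq_nonneg (dx * (dy * X)))]
    have h4 : 4 * (G1 * dx * (dy * X)) ^ 2 ≤ (2 * G * dx ^ 2 + G2 * (dy * X) ^ 2) ^ 2 := by
      nlinarith [sq_nonneg (2 * G * dx ^ 2 - G2 * (dy * X) ^ 2), hAB]
    nlinarith [h4, hA, hB]
  exact convexOn_of_hasDerivWithinAt2_nonneg (convex_Icc 0 1) hcont hf' hf'' hnn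
theorem stmt_1 (c α : ℝ) (hc : 0 ≤ c) (hα : 2 ≤ α) (hα' : α ≤ 6) :
    ConvexOn ℝ {p : ℝ × ℝ | 0 < p.1 ∧ 0 < p.2}
      (fun p : ℝ × ℝ => (1 / p.1) * Real.logb 2 (1 + c / p.2 ^ (α / 2))) := by
  have hsconv : Convex ℝ {p : ℝ × ℝ | 0 < p.1 ∧ 0 < p.2} := by
    intro p hp q hq a b ha hb hab
    simp only [Set.mem_setOf_eq] at *
    have hcomb : ∀ x y : ℝ, 0 < x → 0 < y → 0 < a * x + b * y := by
      intro x y hx hy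
      rcases ha.eq_or_lt with h | h
      · have hb1 : b = 1 := by linarith
        rw [← h, hb1]; simpa using hy
      · nlinarith [mul_pos h hx, mul_nonneg hb hy.le]
    exact ⟨hcomb p.1 q.1 hp.1 hq.1, hcomb p.2 q.2 hp.2 hq.2⟩
  rcases hc.eq_or_lt with h | hcpos
  · simp only [← h, zero_div, add_zero, Real.logb_one, mul_zero]
    exact convexOn_const 0 hsconv
  refine ⟨hsconv, ?_⟩
  intro p hp q hq a b ha hb hab
  simp only [Set.mem_setOf_eq] at hp hq
  have hβ1 : 1 ≤ α / 2 := by linarith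
  have hβ3 : α / 2 ≤ 3 := by linarith
  have hL : 0 < Real.log 2 := Real.log_pos (by norm_num)
  have hXpos : ∀ t ∈ Set.Icc (0:ℝ) 1, 0 < p.1 + t * (q.1 - p.1) := by
    intro t ht
    rcases eq_or_lt_of_le ht.2 with h | h
    · rw [h]; nlinarith [hq.1]
    · nlinarith [mul_pos (show (0:ℝ) < 1 - t by linarith) hp.1, mul_nonneg ht.1 hq.1.le]
  have hYpos : ∀ t ∈ Set.Icc (0:ℝ) 1, 0 < p.2 + t * (q.2 - p.2) := by
    intro t ht
    rcases eq_or_lt_of_le ht.2 with h | h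
    · rw [h]; nlinarith [hq.2]
    · nlinarith [mul_pos (show (0:ℝ) < 1 - t by linarith) hp.2, mul_nonneg ht.1 hq.2.le]
  have hseg := seg_convex (β := α / 2) (c := c) hβ1 hβ3 hcpos hL hXpos hYpos
  have h01 : (0:ℝ) ∈ Set.Icc (0:ℝ) 1 := by norm_num
  have h11 : (1:ℝ) ∈ Set.Icc (0:ℝ) 1 := by norm_num
  have hineq := hseg.2 h01 h11 ha hb hab
  have hb' : a • (0:ℝ) + b • (1:ℝ) = b := by simp
  rw [hb'] at hineq
  simp only [smul_eq_mul] at hineq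
  have e0x : p.1 + (0:ℝ) * (q.1 - p.1) = p.1 := by ring
  have e0y : p.2 + (0:ℝ) * (q.2 - p.2) = p.2 := by ring
  have e1x : p.1 + (1:ℝ) * (q.1 - p.1) = q.1 := by ring
  have e1y : p.2 + (1:ℝ) * (q.2 - p.2) = q.2 := by ring
  rw [e0x, e0y, e1x, e1y] at hineq
  have ha1 : a = 1 - b := by linarith
  have eax : (a • p + b • q).1 = p.1 + b * (q.1 - p.1) := by
    simp only [Prod.fst_add, Prod.smul_fst, smul_eq_mul]; rw [ha1]; ring
  have eay : (a • p + b • q).2 = p.2 + b * (q.2 - p.2) := by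
    simp only [Prod.snd_add, Prod.smul_snd, smul_eq_mul]; rw [ha1]; ring
  have hF : ∀ x y : ℝ, (1 / x) * Real.logb 2 (1 + c / y ^ (α / 2))
      = x⁻¹ * Real.log (1 + c / y ^ (α / 2)) / Real.log 2 := by
    intro x y; rw [Real.logb]; ring
  simp only [smul_eq_mul]
  rw [hF, hF, hF, eax, eay]
  exact hineq
end

section
/- Let X, Y be independent nonnegative random variables with continuous strictly increasing CDFs F_X, F_Y, and let c > 0. For positive integers U_X, U_Y define γᵢ = F_X^{-1}((i−1)/U_X) and νⱼ = F_Y^{-1}((j−1)/U_Y). Then E[log₂(1 + c·X·Y)] ≥ (1/(U_X·U_Y))·Σᵢ Σⱼ log₂(1 + c·γᵢ·νⱼ). -/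
open MeasureTheory ProbabilityTheory

lemma my_measure_union_add_inter_le {α : Type*} [MeasurableSpace α] (μ : Measure α)
    (s t : Set α) : μ (s ∪ t) + μ (s ∩ t) ≤ μ s + μ t := by
  have h1 : μ (s ∪ t) ≤ μ (toMeasurable μ s ∪ toMeasurable μ t) :=
    measure_mono (Set.union_subset_union (subset_toMeasurable μ s) (subset_toMeasurable μ t))
  have h2 : μ (s ∩ t) ≤ μ (toMeasurable μ s ∩ toMeasurable μ t) :=
    measure_mono (Set.inter_subset_inter (subset_toMeasurable μ s) (subset_toMeasurable μ t))
  calc μ (s ∪ t) + μ (s ∩ t)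
      ≤ μ (toMeasurable μ s ∪ toMeasurable μ t) + μ (toMeasurable μ s ∩ toMeasurable μ t) :=
        add_le_add h1 h2
    _ = μ (toMeasurable μ s) + μ (toMeasurable μ t) :=
        measure_union_add_inter _ (measurableSet_toMeasurable μ t)
    _ = μ s + μ t := by rw [measure_toMeasurable, measure_toMeasurable]

lemma my_abel1 (d : ℕ → ℝ) (n : ℕ) :
    ∑ k ∈ Finset.range n, ∑ i ∈ Finset.range k, d i
      = ∑ i ∈ Finset.range n, ((n - 1 - i : ℕ) : ℝ) * d i := by
  induction n with
  | zero => simp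
  | succ n ih =>
    rw [Finset.sum_range_succ, ih, Finset.sum_range_succ]
    have h0 : ((n + 1 - 1 - n : ℕ) : ℝ) = 0 := by norm_num
    rw [h0, zero_mul, add_zero, ← Finset.sum_add_distrib]
    refine Finset.sum_congr rfl fun i hi => ?_
    have hi' : i < n := Finset.mem_range.mp hi
    have hcast : (n + 1 - 1 - i : ℕ) = (n - 1 - i) + 1 := by omega
    rw [hcast]
    push_cast
    ring

lemma my_supermod {c x1 x2 y1 y2 : ℝ} (hc : 0 < c) (hx1 : 0 ≤ x1) (hx : x1 ≤ x2)
    (hy1 : 0 ≤ y1) (hy : y1 ≤ y2) :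
    Real.logb 2 (1 + c * x2 * y1) + Real.logb 2 (1 + c * x1 * y2)
      ≤ Real.logb 2 (1 + c * x1 * y1) + Real.logb 2 (1 + c * x2 * y2) := by
  have hx2 : 0 ≤ x2 := le_trans hx1 hx
  have hy2 : 0 ≤ y2 := le_trans hy1 hy
  have p1 : (0:ℝ) < 1 + c * x2 * y1 := by nlinarith [mul_nonneg (mul_nonneg hc.le hx2) hy1]
  have p2 : (0:ℝ) < 1 + c * x1 * y2 := by nlinarith [mul_nonneg (mul_nonneg hc.le hx1) hy2]
  have p3 : (0:ℝ) < 1 + c * x1 * y1 := by nlinarith [mul_nonneg (mul_nonneg hc.le hx1) hy1]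
  have p4 : (0:ℝ) < 1 + c * x2 * y2 := by nlinarith [mul_nonneg (mul_nonneg hc.le hx2) hy2]
  rw [← Real.logb_mul (ne_of_gt p1) (ne_of_gt p2), ← Real.logb_mul (ne_of_gt p3) (ne_of_gt p4)]
  apply Real.logb_le_logb_of_le one_lt_two (mul_pos p1 p2)
  nlinarith [mul_nonneg (mul_nonneg hc.le (sub_nonneg.2 hx)) (sub_nonneg.2 hy)]

lemma my_level {a : ℕ → ℝ} {x : ℝ} {N : ℕ} (h0 : a 0 ≤ x)
    (hmono : ∀ m m', m ≤ m' → m' ≤ N → a m ≤ a m') :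
    ∃ k, k ≤ N ∧ a k ≤ x ∧ ∀ i, i + 1 ≤ N → (a (i+1) ≤ x ↔ i < k) := by
  classical
  refine ⟨Nat.findGreatest (fun m => a m ≤ x) N, Nat.findGreatest_le _,
    Nat.findGreatest_spec (P := fun m => a m ≤ x) (Nat.zero_le _) h0, ?_⟩
  intro i hi
  constructor
  · intro h
    have := Nat.le_findGreatest (P := fun m => a m ≤ x) hi h
    omega
  · intro h
    exact le_trans (hmono (i+1) _ h (Nat.findGreatest_le _))
      (Nat.findGreatest_spec (P := fun m => a m ≤ x) (Nat.zero_le _) h0)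

set_option maxHeartbeats 2000000 in
/-- Two-dimensional CDF-domain quadrature lower bound for the NLoS expected SE. -/
theorem stmt_14 {Ω : Type*} [MeasureSpace Ω] [IsProbabilityMeasure (volume : Measure Ω)]
    (X Y : Ω → ℝ) (hX0 : ∀ᵐ ω, 0 ≤ X ω) (hY0 : ∀ᵐ ω, 0 ≤ Y ω)
    (hindep : IndepFun X Y (volume : Measure Ω))
    (FX FY : ℝ → ℝ)
    (hFX : ∀ t, FX t = ((volume : Measure Ω) {ω | X ω ≤ t}).toReal)
    (hFY : ∀ t, FY t = ((volume : Measure Ω) {ω | Y ω ≤ t}).toReal)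
    (hFXc : Continuous FX) (hFYc : Continuous FY)
    (hFXm : StrictMonoOn FX (Set.Ici 0)) (hFYm : StrictMonoOn FY (Set.Ici 0))
    (FXinv FYinv : ℝ → ℝ)
    (hFXinv : ∀ p, 0 < p → p < 1 → 0 ≤ FXinv p ∧ FX (FXinv p) = p) (hFXinv0 : FXinv 0 = 0)
    (hFYinv : ∀ p, 0 < p → p < 1 → 0 ≤ FYinv p ∧ FY (FYinv p) = p) (hFYinv0 : FYinv 0 = 0)
    (c : ℝ) (hc : 0 < c)
    (hint : Integrable (fun ω => Real.logb 2 (1 + c * X ω * Y ω)))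
    (UX UY : ℕ) (hUX : 1 ≤ UX) (hUY : 1 ≤ UY) :
    (1 / ((UX : ℝ) * UY)) *
        ∑ i ∈ Finset.range UX, ∑ j ∈ Finset.range UY,
          Real.logb 2 (1 + c * FXinv ((i : ℝ) / UX) * FYinv ((j : ℝ) / UY))
      ≤ ∫ ω, Real.logb 2 (1 + c * X ω * Y ω) := by
  classical
  set f : Ω → ℝ := fun ω => Real.logb 2 (1 + c * X ω * Y ω) with hfdef
  set a : ℕ → ℝ := fun i => FXinv ((i : ℝ) / UX) with hadef
  set b : ℕ → ℝ := fun j => FYinv ((j : ℝ) / UY) with hbdef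
  set g : ℕ → ℕ → ℝ := fun i j => Real.logb 2 (1 + c * a i * b j) with hgdef
  set Δ : ℕ → ℕ → ℝ :=
    fun i j => g (i+1) (j+1) - g i (j+1) - g (i+1) j + g i j with hΔdef
  have hUX0 : (0:ℝ) < UX := by exact_mod_cast hUX
  have hUY0 : (0:ℝ) < UY := by exact_mod_cast hUY
  have ha0 : a 0 = 0 := by simp [hadef, hFXinv0]
  have hb0 : b 0 = 0 := by simp [hbdef, hFYinv0]
  have haP : ∀ m : ℕ, 1 ≤ m → m < UX → 0 ≤ a m ∧ FX (a m) = (m : ℝ) / UX := by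
    intro m h1 h2
    exact hFXinv _ (div_pos (by exact_mod_cast h1) hUX0)
      ((div_lt_one hUX0).mpr (by exact_mod_cast h2))
  have hbP : ∀ m : ℕ, 1 ≤ m → m < UY → 0 ≤ b m ∧ FY (b m) = (m : ℝ) / UY := by
    intro m h1 h2
    exact hFYinv _ (div_pos (by exact_mod_cast h1) hUY0)
      ((div_lt_one hUY0).mpr (by exact_mod_cast h2))
  have hann : ∀ m : ℕ, m < UX → 0 ≤ a m := by
    intro m hm
    rcases Nat.eq_zero_or_pos m with rfl | h1
    · rw [ha0]
    · exact (haP m h1 hm).1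
  have hbnn : ∀ m : ℕ, m < UY → 0 ≤ b m := by
    intro m hm
    rcases Nat.eq_zero_or_pos m with rfl | h1
    · rw [hb0]
    · exact (hbP m h1 hm).1
  have hamono : ∀ m m' : ℕ, m ≤ m' → m' < UX → a m ≤ a m' := by
    intro m m' hmm hm'
    rcases Nat.eq_zero_or_pos m with rfl | h1
    · rw [ha0]; exact hann m' hm'
    by_contra hlt
    push_neg at hlt
    have hs := hFXm (Set.mem_Ici.mpr (hann m' hm'))
      (Set.mem_Ici.mpr (hann m (lt_of_le_of_lt hmm hm'))) hlt
    rw [(haP m h1 (lt_of_le_of_lt hmm hm')).2, (haP m' (le_trans h1 hmm) hm').2] at hs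
    have : (m' : ℝ) < m := by
      have := (div_lt_div_iff_of_pos_right hUX0).mp hs
      exact this
    exact absurd (by exact_mod_cast this) (not_lt.mpr hmm)
  have hbmono : ∀ m m' : ℕ, m ≤ m' → m' < UY → b m ≤ b m' := by
    intro m m' hmm hm'
    rcases Nat.eq_zero_or_pos m with rfl | h1
    · rw [hb0]; exact hbnn m' hm'
    by_contra hlt
    push_neg at hlt
    have hs := hFYm (Set.mem_Ici.mpr (hbnn m' hm'))
      (Set.mem_Ici.mpr (hbnn m (lt_of_le_of_lt hmm hm'))) hlt
    rw [(hbP m h1 (lt_of_le_of_lt hmm hm')).2, (hbP m' (le_trans h1 hmm) hm').2] at hs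
    have : (m' : ℝ) < m := (div_lt_div_iff_of_pos_right hUY0).mp hs
    exact absurd (by exact_mod_cast this) (not_lt.mpr hmm)
  have hΔnn : ∀ i j : ℕ, i + 1 < UX → j + 1 < UY → 0 ≤ Δ i j := by
    intro i j hi hj
    have h := my_supermod hc (hann i (by omega)) (hamono i (i+1) (by omega) hi)
      (hbnn j (by omega)) (hbmono j (j+1) (by omega) hj)
    simp only [hΔdef, hgdef]
    linarith
  have hg0l : ∀ l, g 0 l = 0 := by
    intro l; simp only [hgdef, ha0]; simp
  have hgk0 : ∀ k, g k 0 = 0 := by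
    intro k; simp only [hgdef, hb0]; simp
  -- telescoping
  have htel : ∀ k l : ℕ, ∑ i ∈ Finset.range k, ∑ j ∈ Finset.range l, Δ i j = g k l := by
    intro k l
    have hrow : ∀ i, ∑ j ∈ Finset.range l, Δ i j
        = (g (i+1) l - g i l) - (g (i+1) 0 - g i 0) := by
      intro i
      have h := Finset.sum_range_sub (fun j => g (i+1) j - g i j) l
      rw [← h]
      refine Finset.sum_congr rfl fun j _ => ?_
      simp only [hΔdef]; ring
    calc ∑ i ∈ Finset.range k, ∑ j ∈ Finset.range l, Δ i j
        = ∑ i ∈ Finset.range k,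
            (((g (i+1) l - g (i+1) 0) - (g i l - g i 0))) := by
          refine Finset.sum_congr rfl fun i _ => ?_
          rw [hrow i]; ring
      _ = (g k l - g k 0) - (g 0 l - g 0 0) :=
          Finset.sum_range_sub (fun i => g i l - g i 0) k
      _ = g k l := by rw [hgk0, hg0l, hgk0]; ring
  -- Abel resummation
  have hAbel : ∑ k ∈ Finset.range UX, ∑ l ∈ Finset.range UY, g k l
      = ∑ i ∈ Finset.range UX, ∑ j ∈ Finset.range UY,
          ((UX - 1 - i : ℕ) : ℝ) * (((UY - 1 - j : ℕ) : ℝ) * Δ i j) := by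
    have step1 : ∀ k, ∑ l ∈ Finset.range UY, g k l
        = ∑ j ∈ Finset.range UY, ((UY - 1 - j : ℕ) : ℝ) * ∑ i ∈ Finset.range k, Δ i j := by
      intro k
      have : ∀ l, g k l = ∑ j ∈ Finset.range l, ∑ i ∈ Finset.range k, Δ i j := by
        intro l; rw [Finset.sum_comm, htel]
      calc ∑ l ∈ Finset.range UY, g k l
          = ∑ l ∈ Finset.range UY, ∑ j ∈ Finset.range l,
              (∑ i ∈ Finset.range k, Δ i j) := Finset.sum_congr rfl fun l _ => this l
        _ = _ := my_abel1 (fun j => ∑ i ∈ Finset.range k, Δ i j) UY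
    calc ∑ k ∈ Finset.range UX, ∑ l ∈ Finset.range UY, g k l
        = ∑ k ∈ Finset.range UX, ∑ j ∈ Finset.range UY,
            ((UY - 1 - j : ℕ) : ℝ) * ∑ i ∈ Finset.range k, Δ i j :=
          Finset.sum_congr rfl fun k _ => step1 k
      _ = ∑ j ∈ Finset.range UY, ∑ k ∈ Finset.range UX,
            ((UY - 1 - j : ℕ) : ℝ) * ∑ i ∈ Finset.range k, Δ i j := Finset.sum_comm
      _ = ∑ j ∈ Finset.range UY, ((UY - 1 - j : ℕ) : ℝ) *
            ∑ k ∈ Finset.range UX, ∑ i ∈ Finset.range k, Δ i j := by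
          refine Finset.sum_congr rfl fun j _ => ?_
          rw [Finset.mul_sum]
      _ = ∑ j ∈ Finset.range UY, ((UY - 1 - j : ℕ) : ℝ) *
            ∑ i ∈ Finset.range UX, ((UX - 1 - i : ℕ) : ℝ) * Δ i j := by
          refine Finset.sum_congr rfl fun j _ => ?_
          rw [my_abel1 (fun i => Δ i j) UX]
      _ = ∑ j ∈ Finset.range UY, ∑ i ∈ Finset.range UX,
            ((UX - 1 - i : ℕ) : ℝ) * (((UY - 1 - j : ℕ) : ℝ) * Δ i j) := by
          refine Finset.sum_congr rfl fun j _ => ?_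
          rw [Finset.mul_sum]
          exact Finset.sum_congr rfl fun i _ => by ring
      _ = _ := Finset.sum_comm
  have hdrop : ∑ i ∈ Finset.range UX, ∑ j ∈ Finset.range UY,
        ((UX - 1 - i : ℕ) : ℝ) * (((UY - 1 - j : ℕ) : ℝ) * Δ i j)
      = ∑ i ∈ Finset.range (UX - 1), ∑ j ∈ Finset.range (UY - 1),
        ((UX - 1 - i : ℕ) : ℝ) * (((UY - 1 - j : ℕ) : ℝ) * Δ i j) := by
    rw [← Finset.sum_subset (Finset.range_subset_range.mpr (Nat.sub_le UX 1))]
    · refine Finset.sum_congr rfl fun i hi => ?_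
      rw [← Finset.sum_subset (Finset.range_subset_range.mpr (Nat.sub_le UY 1))]
      intro j hj hj'
      have : (UY - 1 - j : ℕ) = 0 := by
        have h1 := Finset.mem_range.mp hj
        have h2 : ¬ j < UY - 1 := fun h => hj' (Finset.mem_range.mpr h)
        omega
      rw [this]; simp
    · intro i hi hi'
      have : (UX - 1 - i : ℕ) = 0 := by
        have h1 := Finset.mem_range.mp hi
        have h2 : ¬ i < UX - 1 := fun h => hi' (Finset.mem_range.mpr h)
        omega
      rw [this]; simp
  -- the sets
  set A : ℕ → Set Ω := fun i => {ω | a (i+1) ≤ X ω} with hAdef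
  set B : ℕ → Set Ω := fun j => {ω | b (j+1) ≤ Y ω} with hBdef
  set S : ℕ → ℕ → Set Ω := fun i j => A i ∩ B j with hSdef
  set T : ℕ → ℕ → Set Ω :=
    fun i j => (toMeasurable volume ((S i j)ᶜ))ᶜ with hTdef
  have hTm : ∀ i j, MeasurableSet (T i j) :=
    fun i j => (measurableSet_toMeasurable _ _).compl
  have hTS : ∀ i j, T i j ⊆ S i j := by
    intro i j
    simp only [hTdef]
    rw [Set.compl_subset_comm]
    exact subset_toMeasurable _ _
  -- measure lower bound
  have hμT : ∀ i ∈ Finset.range (UX - 1), ∀ j ∈ Finset.range (UY - 1),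
      ((UX - 1 - i : ℕ) : ℝ) / UX * (((UY - 1 - j : ℕ) : ℝ) / UY)
        ≤ ((volume : Measure Ω) (T i j)).toReal := by
    intro i hi j hj
    have hiu : i + 1 < UX := by have := Finset.mem_range.mp hi; omega
    have hju : j + 1 < UY := by have := Finset.mem_range.mp hj; omega
    have hAc : (A i)ᶜ = X ⁻¹' (Set.Iio (a (i+1))) := by
      ext ω; simp [hAdef, not_le]
    have hBc : (B j)ᶜ = Y ⁻¹' (Set.Iio (b (j+1))) := by
      ext ω; simp [hBdef, not_le]
    have hprod : (volume : Measure Ω) ((A i)ᶜ ∩ (B j)ᶜ)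
        = (volume : Measure Ω) ((A i)ᶜ) * (volume : Measure Ω) ((B j)ᶜ) := by
      rw [hAc, hBc]
      exact hindep.measure_inter_preimage_eq_mul _ _ measurableSet_Iio measurableSet_Iio
    have hScompl : (S i j)ᶜ = (A i)ᶜ ∪ (B j)ᶜ := by
      simp [hSdef, Set.compl_inter]
    have hsubm : (volume : Measure Ω) ((S i j)ᶜ) + (volume : Measure Ω) ((A i)ᶜ ∩ (B j)ᶜ)
        ≤ (volume : Measure Ω) ((A i)ᶜ) + (volume : Measure Ω) ((B j)ᶜ) := by
      rw [hScompl]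
      exact my_measure_union_add_inter_le _ _ _
    set u : ℝ := ((volume : Measure Ω) ((A i)ᶜ)).toReal with hu
    set v : ℝ := ((volume : Measure Ω) ((B j)ᶜ)).toReal with hv
    set s' : ℝ := ((volume : Measure Ω) ((S i j)ᶜ)).toReal with hs'
    have hu0 : 0 ≤ u := ENNReal.toReal_nonneg
    have hv0 : 0 ≤ v := ENNReal.toReal_nonneg
    have hsub' : s' + u * v ≤ u + v := by
      have h4 := ENNReal.toReal_mono
        (ENNReal.add_ne_top.mpr ⟨measure_ne_top _ _, measure_ne_top _ _⟩) hsubm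
      rw [ENNReal.toReal_add (measure_ne_top _ _) (measure_ne_top _ _),
        ENNReal.toReal_add (measure_ne_top _ _) (measure_ne_top _ _),
        hprod, ENNReal.toReal_mul] at h4
      exact h4
    have hu_le : u ≤ ((i:ℝ)+1) / UX := by
      have h1 : (volume : Measure Ω) ((A i)ᶜ) ≤ (volume : Measure Ω) {ω | X ω ≤ a (i+1)} := by
        apply measure_mono
        intro ω hω
        rw [hAc] at hω
        simp only [Set.mem_preimage, Set.mem_Iio] at hω
        exact le_of_lt hω
      have h3 : FX (a (i+1)) = ((i+1 : ℕ) : ℝ) / UX := (haP (i+1) (by omega) hiu).2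
      calc u ≤ ((volume : Measure Ω) {ω | X ω ≤ a (i+1)}).toReal :=
            ENNReal.toReal_mono (measure_ne_top _ _) h1
        _ = FX (a (i+1)) := (hFX _).symm
        _ = ((i:ℝ)+1) / UX := by rw [h3]; push_cast; ring
    have hv_le : v ≤ ((j:ℝ)+1) / UY := by
      have h1 : (volume : Measure Ω) ((B j)ᶜ) ≤ (volume : Measure Ω) {ω | Y ω ≤ b (j+1)} := by
        apply measure_mono
        intro ω hω
        rw [hBc] at hω
        simp only [Set.mem_preimage, Set.mem_Iio] at hω
        exact le_of_lt hω
      have h3 : FY (b (j+1)) = ((j+1 : ℕ) : ℝ) / UY := (hbP (j+1) (by omega) hju).2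
      calc v ≤ ((volume : Measure Ω) {ω | Y ω ≤ b (j+1)}).toReal :=
            ENNReal.toReal_mono (measure_ne_top _ _) h1
        _ = FY (b (j+1)) := (hFY _).symm
        _ = ((j:ℝ)+1) / UY := by rw [h3]; push_cast; ring
    have hT1 : ((volume : Measure Ω) (T i j)).toReal = 1 - s' := by
      have hc1 : (volume : Measure Ω) (toMeasurable volume ((S i j)ᶜ)) + (volume : Measure Ω) (T i j) = 1 := by
        rw [hTdef]
        rw [measure_add_measure_compl (measurableSet_toMeasurable _ _)]
        exact measure_univ
      have h5 := congrArg ENNReal.toReal hc1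
      rw [ENNReal.toReal_add (measure_ne_top _ _) (measure_ne_top _ _),
        measure_toMeasurable, ENNReal.toReal_one] at h5
      rw [← hs'] at h5
      linarith
    rw [hT1]
    have hcastX : ((UX - 1 - i : ℕ) : ℝ) = (UX : ℝ) - ((i:ℝ)+1) := by
      have h6 : (UX - 1 - i : ℕ) = UX - (i+1) := by omega
      rw [h6, Nat.cast_sub (by omega)]
      push_cast; ring
    have hcastY : ((UY - 1 - j : ℕ) : ℝ) = (UY : ℝ) - ((j:ℝ)+1) := by
      have h6 : (UY - 1 - j : ℕ) = UY - (j+1) := by omega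
      rw [h6, Nat.cast_sub (by omega)]
      push_cast; ring
    rw [hcastX, hcastY]
    have hp1 : ((i:ℝ)+1) / UX ≤ 1 := by
      rw [div_le_one hUX0]; exact_mod_cast hiu.le
    have hq1 : ((j:ℝ)+1) / UY ≤ 1 := by
      rw [div_le_one hUY0]; exact_mod_cast hju.le
    have hdx : ((UX : ℝ) - ((i:ℝ)+1)) / UX = 1 - ((i:ℝ)+1)/UX := by
      field_simp
    have hdy : ((UY : ℝ) - ((j:ℝ)+1)) / UY = 1 - ((j:ℝ)+1)/UY := by
      field_simp
    rw [hdx, hdy]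
    have hmm : (1 - ((i:ℝ)+1)/UX) * (1 - ((j:ℝ)+1)/UY) ≤ (1 - u) * (1 - v) := by
      apply mul_le_mul (by linarith) (by linarith) (by linarith) (by linarith)
    nlinarith [hsub']
  -- pointwise bound
  have hkUXlt : UX - 1 < UX := by omega
  have hlUYlt : UY - 1 < UY := by omega
  have hptR : ∀ ω, 0 ≤ X ω → 0 ≤ Y ω →
      ∑ i ∈ Finset.range (UX - 1), ∑ j ∈ Finset.range (UY - 1),
        Set.indicator (S i j) (fun _ => Δ i j) ω ≤ f ω := by
    intro ω hx hy
    have hP0 : a 0 ≤ X ω := by rw [ha0]; exact hx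
    have hQ0 : b 0 ≤ Y ω := by rw [hb0]; exact hy
    obtain ⟨k, hkle, hak, hkiff⟩ := my_level (N := UX - 1) hP0
      (fun m m' hmm hm' => hamono m m' hmm (by omega))
    obtain ⟨l, hlle, hbl, hliff⟩ := my_level (N := UY - 1) hQ0
      (fun m m' hmm hm' => hbmono m m' hmm (by omega))
    have hmemA : ∀ i, i < UX - 1 → (ω ∈ A i ↔ i < k) := by
      intro i hi
      rw [hAdef]
      simp only [Set.mem_setOf_eq]
      exact hkiff i (by omega)
    have hmemB : ∀ j, j < UY - 1 → (ω ∈ B j ↔ j < l) := by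
      intro j hj
      rw [hBdef]
      simp only [Set.mem_setOf_eq]
      exact hliff j (by omega)
    have hstep : ∑ i ∈ Finset.range (UX - 1), ∑ j ∈ Finset.range (UY - 1),
        Set.indicator (S i j) (fun _ => Δ i j) ω
        = ∑ i ∈ Finset.range k, ∑ j ∈ Finset.range l, Δ i j := by
      have houter : ∀ i ∈ Finset.range (UX - 1), i ∉ Finset.range k →
          (∑ j ∈ Finset.range (UY - 1), Set.indicator (S i j) (fun _ => Δ i j) ω) = 0 := by
        intro i hi hik
        apply Finset.sum_eq_zero
        intro j _
        apply Set.indicator_of_notMem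
        intro hmem
        rw [hSdef] at hmem
        have hAi : ω ∈ A i := hmem.1
        rw [hmemA i (Finset.mem_range.mp hi)] at hAi
        exact hik (Finset.mem_range.mpr hAi)
      have hinner : ∀ i ∈ Finset.range k,
          (∑ j ∈ Finset.range (UY - 1), Set.indicator (S i j) (fun _ => Δ i j) ω)
            = ∑ j ∈ Finset.range l, Δ i j := by
        intro i hi
        have hik : i < k := Finset.mem_range.mp hi
        have hiUX : i < UX - 1 := lt_of_lt_of_le hik hkle
        have hAi : ω ∈ A i := (hmemA i hiUX).mpr hik
        calc ∑ j ∈ Finset.range (UY - 1), Set.indicator (S i j) (fun _ => Δ i j) ω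
            = ∑ j ∈ Finset.range l, Set.indicator (S i j) (fun _ => Δ i j) ω := by
              refine (Finset.sum_subset (Finset.range_subset_range.mpr hlle) ?_).symm
              intro j hj hjl
              apply Set.indicator_of_notMem
              intro hmem
              rw [hSdef] at hmem
              have hBj : ω ∈ B j := hmem.2
              rw [hmemB j (Finset.mem_range.mp hj)] at hBj
              exact hjl (Finset.mem_range.mpr hBj)
          _ = ∑ j ∈ Finset.range l, Δ i j := by
              refine Finset.sum_congr rfl fun j hj => ?_
              have hjl : j < l := Finset.mem_range.mp hj
              have hBj : ω ∈ B j := (hmemB j (lt_of_lt_of_le hjl hlle)).mpr hjl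
              exact Set.indicator_of_mem (by rw [hSdef]; exact ⟨hAi, hBj⟩) _
      calc ∑ i ∈ Finset.range (UX - 1), ∑ j ∈ Finset.range (UY - 1),
            Set.indicator (S i j) (fun _ => Δ i j) ω
          = ∑ i ∈ Finset.range k, ∑ j ∈ Finset.range (UY - 1),
            Set.indicator (S i j) (fun _ => Δ i j) ω :=
            (Finset.sum_subset (Finset.range_subset_range.mpr hkle) houter).symm
        _ = ∑ i ∈ Finset.range k, ∑ j ∈ Finset.range l, Δ i j :=
            Finset.sum_congr rfl hinner
    rw [hstep, htel k l]
    have h0ak : 0 ≤ a k := hann k (by omega)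
    have h0bl : 0 ≤ b l := hbnn l (by omega)
    have hmul : c * a k * b l ≤ c * X ω * Y ω := by
      calc c * a k * b l ≤ c * a k * Y ω :=
            mul_le_mul_of_nonneg_left hbl (mul_nonneg hc.le h0ak)
        _ ≤ c * X ω * Y ω :=
            mul_le_mul_of_nonneg_right (mul_le_mul_of_nonneg_left hak hc.le) hy
    have hpos : (0:ℝ) < 1 + c * a k * b l := by nlinarith [mul_nonneg (mul_nonneg hc.le h0ak) h0bl]
    simp only [hgdef, hfdef]
    exact Real.logb_le_logb_of_le one_lt_two hpos (by linarith)
  -- integral manipulations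
  have hfnn : 0 ≤ᵐ[(volume : Measure Ω)] f := by
    filter_upwards [hX0, hY0] with ω hx hy
    simp only [hfdef]
    apply Real.logb_nonneg one_lt_two
    nlinarith [mul_nonneg (mul_nonneg hc.le hx) hy]
  have hIeq : ∫ ω, f ω = (∫⁻ ω, ENNReal.ofReal (f ω)).toReal :=
    integral_eq_lintegral_of_nonneg_ae hfnn hint.aestronglyMeasurable
  have hfin : ∫⁻ ω, ENNReal.ofReal (f ω) ≠ ⊤ := hint.lintegral_lt_top.ne
  have hΔnn' : ∀ i ∈ Finset.range (UX - 1), ∀ j ∈ Finset.range (UY - 1), 0 ≤ Δ i j := by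
    intro i hi j hj
    exact hΔnn i j (by have := Finset.mem_range.mp hi; omega)
      (by have := Finset.mem_range.mp hj; omega)
  have hlintle : ∫⁻ ω, (∑ i ∈ Finset.range (UX - 1), ∑ j ∈ Finset.range (UY - 1),
      Set.indicator (T i j) (fun _ => ENNReal.ofReal (Δ i j)) ω)
      ≤ ∫⁻ ω, ENNReal.ofReal (f ω) := by
    apply lintegral_mono_ae
    filter_upwards [hX0, hY0] with ω hx hy
    calc ∑ i ∈ Finset.range (UX - 1), ∑ j ∈ Finset.range (UY - 1),
          Set.indicator (T i j) (fun _ => ENNReal.ofReal (Δ i j)) ω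
        ≤ ∑ i ∈ Finset.range (UX - 1), ∑ j ∈ Finset.range (UY - 1),
          Set.indicator (S i j) (fun _ => ENNReal.ofReal (Δ i j)) ω := by
          refine Finset.sum_le_sum fun i _ => Finset.sum_le_sum fun j _ => ?_
          exact Set.indicator_le_indicator_of_subset (hTS i j) (fun _ => zero_le) ω
      _ = ENNReal.ofReal (∑ i ∈ Finset.range (UX - 1), ∑ j ∈ Finset.range (UY - 1),
          Set.indicator (S i j) (fun _ => Δ i j) ω) := by
          rw [ENNReal.ofReal_sum_of_nonneg]
          · refine Finset.sum_congr rfl fun i hi => ?_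
            rw [ENNReal.ofReal_sum_of_nonneg]
            · refine Finset.sum_congr rfl fun j hj => ?_
              by_cases hmem : ω ∈ S i j
              · rw [Set.indicator_of_mem hmem, Set.indicator_of_mem hmem]
              · rw [Set.indicator_of_notMem hmem, Set.indicator_of_notMem hmem,
                  ENNReal.ofReal_zero]
            · intro j hj
              exact Set.indicator_nonneg (fun _ _ => hΔnn' i hi j hj) ω
          · intro i hi
            apply Finset.sum_nonneg
            intro j hj
            exact Set.indicator_nonneg (fun _ _ => hΔnn' i hi j hj) ω
      _ ≤ ENNReal.ofReal (f ω) := ENNReal.ofReal_le_ofReal (hptR ω hx hy)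
  have hlinteq : ∫⁻ ω, (∑ i ∈ Finset.range (UX - 1), ∑ j ∈ Finset.range (UY - 1),
      Set.indicator (T i j) (fun _ => ENNReal.ofReal (Δ i j)) ω)
      = ∑ i ∈ Finset.range (UX - 1), ∑ j ∈ Finset.range (UY - 1),
        ENNReal.ofReal (Δ i j) * (volume : Measure Ω) (T i j) := by
    rw [lintegral_finset_sum]
    · refine Finset.sum_congr rfl fun i _ => ?_
      rw [lintegral_finset_sum]
      · exact Finset.sum_congr rfl fun j _ => lintegral_indicator_const (hTm i j) _
      · intro j _
        exact measurable_const.indicator (hTm i j)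
    · intro i _
      apply Finset.measurable_sum
      intro j _
      exact measurable_const.indicator (hTm i j)
  have hsum2 : ENNReal.ofReal (∑ i ∈ Finset.range (UX - 1), ∑ j ∈ Finset.range (UY - 1),
      Δ i j * ((volume : Measure Ω) (T i j)).toReal)
      = ∑ i ∈ Finset.range (UX - 1), ∑ j ∈ Finset.range (UY - 1),
        ENNReal.ofReal (Δ i j) * (volume : Measure Ω) (T i j) := by
    rw [ENNReal.ofReal_sum_of_nonneg]
    · refine Finset.sum_congr rfl fun i hi => ?_
      rw [ENNReal.ofReal_sum_of_nonneg]
      · refine Finset.sum_congr rfl fun j hj => ?_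
        rw [ENNReal.ofReal_mul (hΔnn' i hi j hj),
          ENNReal.ofReal_toReal (measure_ne_top _ _)]
      · intro j hj
        exact mul_nonneg (hΔnn' i hi j hj) ENNReal.toReal_nonneg
    · intro i hi
      apply Finset.sum_nonneg
      intro j hj
      exact mul_nonneg (hΔnn' i hi j hj) ENNReal.toReal_nonneg
  have hRr : ∑ i ∈ Finset.range (UX - 1), ∑ j ∈ Finset.range (UY - 1),
      Δ i j * ((volume : Measure Ω) (T i j)).toReal
      ≤ (∫⁻ ω, ENNReal.ofReal (f ω)).toReal := by
    apply (ENNReal.ofReal_le_iff_le_toReal hfin).mp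
    rw [hsum2, ← hlinteq]
    exact hlintle
  -- putting it together
  have hgoal1 : (1 / ((UX : ℝ) * UY)) *
      ∑ i ∈ Finset.range UX, ∑ j ∈ Finset.range UY,
        Real.logb 2 (1 + c * FXinv ((i : ℝ) / UX) * FYinv ((j : ℝ) / UY))
      = ∑ i ∈ Finset.range (UX - 1), ∑ j ∈ Finset.range (UY - 1),
        Δ i j * (((UX - 1 - i : ℕ) : ℝ) / UX * (((UY - 1 - j : ℕ) : ℝ) / UY)) := by
    have hsg : ∑ i ∈ Finset.range UX, ∑ j ∈ Finset.range UY,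
        Real.logb 2 (1 + c * FXinv ((i : ℝ) / UX) * FYinv ((j : ℝ) / UY))
        = ∑ k ∈ Finset.range UX, ∑ l ∈ Finset.range UY, g k l := by
      refine Finset.sum_congr rfl fun i _ => Finset.sum_congr rfl fun j _ => ?_
      simp only [hgdef, hadef, hbdef]
    rw [hsg, hAbel, hdrop, Finset.mul_sum]
    refine Finset.sum_congr rfl fun i _ => ?_
    rw [Finset.mul_sum]
    refine Finset.sum_congr rfl fun j _ => ?_
    field_simp
  rw [hgoal1, hIeq]
  refine le_trans (Finset.sum_le_sum fun i hi => Finset.sum_le_sum fun j hj => ?_) hRr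
  exact mul_le_mul_of_nonneg_left (hμT i hi j hj) (hΔnn' i hi j hj)
end
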